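/- arXiv:1509.01234 — 5 statements merged into one kernel-verified Lean document; each statement's English description precedes it below -/
import Mathlib

section
/- Every bounded implicative BCK-algebra X forms a BCK-module over itself, with group operation and scalar multiplication both defined appropriately via the BCK operations. -/
/-- A BCK-algebra `(X, *, 0)`. The order `a ≤ b` is defined by `star a b = zero`. -/
structure BCKAlgebra (X : Type) where
  star : X → X → X
  zero : X
  bck1 : ∀ a b c, star (star (star a b) (star a c)) (star c b) = zero
  bck2 : ∀ a b, star (star a (star a b)) b = zero
  bck3 : ∀ a, star a a = zero
  bck4 : ∀ a, star zero a = zero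
  bck5 : ∀ a b, star a b = zero → star b a = zero → a = b

/-- A bounded implicative BCK-algebra. -/
structure BoundedImplicativeBCKAlgebra (X : Type) extends BCKAlgebra X where
  one : X
  bounded : ∀ a, star a one = zero
  implicative : ∀ a b, star a (star b a) = a

namespace BCKHelper

variable {X : Type}

theorem star_zero (A : BoundedImplicativeBCKAlgebra X) (a : X) : A.star a A.zero = a := by
  have h := A.implicative a a
  rwa [A.bck3] at h

theorem bck_trans (A : BoundedImplicativeBCKAlgebra X) {a b c : X}
    (h1 : A.star a b = A.zero) (h2 : A.star b c = A.zero) : A.star a c = A.zero := by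
  have h := A.bck1 a c b
  rwa [h1, star_zero, h2, star_zero] at h

theorem star_le (A : BoundedImplicativeBCKAlgebra X) (a b : X) :
    A.star (A.star a b) a = A.zero := by
  have h := A.bck1 a b A.zero
  rwa [star_zero, A.bck4, star_zero] at h

theorem anti2 (A : BoundedImplicativeBCKAlgebra X) {a b : X} (c : X)
    (h : A.star a b = A.zero) : A.star (A.star c b) (A.star c a) = A.zero := by
  have h2 := A.bck1 c b a
  rwa [h, star_zero] at h2

theorem exch_half (A : BoundedImplicativeBCKAlgebra X) (a b c : X) :
    A.star (A.star (A.star a b) c) (A.star (A.star a c) b) = A.zero := by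
  have hu : A.star (A.star a (A.star a c)) c = A.zero := A.bck2 a c
  have h1 := anti2 A (A.star a b) hu
  have h2 := A.bck1 a b (A.star a c)
  exact bck_trans A h1 h2

theorem exchange (A : BoundedImplicativeBCKAlgebra X) (a b c : X) :
    A.star (A.star a b) c = A.star (A.star a c) b :=
  A.bck5 _ _ (exch_half A a b c) (exch_half A a c b)

theorem star_star_le (A : BoundedImplicativeBCKAlgebra X) (x y z : X) :
    A.star (A.star (A.star x z) (A.star y z)) (A.star x y) = A.zero := by
  have h := exchange A (A.star x z) (A.star y z) (A.star x y)
  rw [h]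
  exact A.bck1 x z y

theorem mono1 (A : BoundedImplicativeBCKAlgebra X) {x y : X} (z : X)
    (h : A.star x y = A.zero) : A.star (A.star x z) (A.star y z) = A.zero := by
  have h2 := star_star_le A x y z
  rwa [h, star_zero] at h2

theorem star_star_star (A : BoundedImplicativeBCKAlgebra X) (x y : X) :
    A.star x (A.star x (A.star x y)) = A.star x y :=
  A.bck5 _ _ (A.bck2 x (A.star x y)) (anti2 A x (A.bck2 x y))

theorem comm_key (A : BoundedImplicativeBCKAlgebra X) (x y : X) :
    A.star (A.star y (A.star y x)) (A.star x y) = A.star y (A.star y x) := by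
  calc A.star (A.star y (A.star y x)) (A.star x y)
      = A.star (A.star y (A.star x y)) (A.star y x) := exchange A y (A.star y x) (A.star x y)
    _ = A.star y (A.star y x) := by rw [A.implicative y x]

theorem comm_half (A : BoundedImplicativeBCKAlgebra X) (x y : X) :
    A.star (A.star y (A.star y x)) (A.star x (A.star x y)) = A.zero := by
  have h1 : A.star (A.star y (A.star y x)) x = A.zero := A.bck2 y x
  have h2 := mono1 A (A.star x y) h1
  have h3 := anti2 A (A.star y (A.star y x)) h2
  rw [comm_key A x y, A.bck3, star_zero] at h3
  exact h3

theorem comm (A : BoundedImplicativeBCKAlgebra X) (x y : X) :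
    A.star x (A.star x y) = A.star y (A.star y x) :=
  A.bck5 _ _ (comm_half A y x) (comm_half A x y)

theorem posimpl1 (A : BoundedImplicativeBCKAlgebra X) (x y : X) :
    A.star (A.star x y) y = A.star x y := by
  have h := A.implicative (A.star x y) y
  rwa [A.implicative y x] at h

/-- meet -/
def inf (A : BoundedImplicativeBCKAlgebra X) (a b : X) : X := A.star a (A.star a b)

theorem inf_le_left (A : BoundedImplicativeBCKAlgebra X) (a b : X) :
    A.star (inf A a b) a = A.zero := star_le A a (A.star a b)

theorem inf_le_right (A : BoundedImplicativeBCKAlgebra X) (a b : X) :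
    A.star (inf A a b) b = A.zero := A.bck2 a b

theorem le_inf (A : BoundedImplicativeBCKAlgebra X) {a b c : X}
    (h1 : A.star c a = A.zero) (h2 : A.star c b = A.zero) :
    A.star c (inf A a b) = A.zero := by
  have hc : A.star a (A.star a c) = c := by rw [comm A a c, h1, star_zero]
  have h3 := anti2 A a h2
  have h4 := anti2 A a h3
  rwa [hc] at h4

theorem Nn (A : BoundedImplicativeBCKAlgebra X) (a : X) :
    A.star A.one (A.star A.one a) = a := by
  rw [comm A A.one a, A.bounded, star_zero]

theorem nstar (A : BoundedImplicativeBCKAlgebra X) (a b : X) :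
    A.star (A.star A.one a) (A.star A.one b) = A.star b a := by
  refine A.bck5 _ _ (A.bck1 A.one a b) ?_
  have h := A.bck1 A.one (A.star A.one b) (A.star A.one a)
  rwa [Nn, Nn] at h

/-- join via De Morgan -/
def sup (A : BoundedImplicativeBCKAlgebra X) (a b : X) : X :=
  A.star A.one (inf A (A.star A.one a) (A.star A.one b))

theorem le_N_of_le_N (A : BoundedImplicativeBCKAlgebra X) {a t : X}
    (h : A.star t (A.star A.one a) = A.zero) : A.star a (A.star A.one t) = A.zero := by
  have h2 := anti2 A A.one h
  rwa [Nn] at h2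

theorem le_sup_left (A : BoundedImplicativeBCKAlgebra X) (a b : X) :
    A.star a (sup A a b) = A.zero :=
  le_N_of_le_N A (inf_le_left A (A.star A.one a) (A.star A.one b))

theorem le_sup_right (A : BoundedImplicativeBCKAlgebra X) (a b : X) :
    A.star b (sup A a b) = A.zero :=
  le_N_of_le_N A (inf_le_right A (A.star A.one a) (A.star A.one b))

theorem sup_le (A : BoundedImplicativeBCKAlgebra X) {a b c : X}
    (h1 : A.star a c = A.zero) (h2 : A.star b c = A.zero) :
    A.star (sup A a b) c = A.zero := by
  have hN1 := anti2 A A.one h1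
  have hN2 := anti2 A A.one h2
  have h3 := le_inf A hN1 hN2
  have h4 := anti2 A A.one h3
  rwa [Nn] at h4

theorem inf_compl_eq (A : BoundedImplicativeBCKAlgebra X) (a : X) :
    inf A a (A.star A.one a) = A.zero := by
  show A.star a (A.star a (A.star A.one a)) = A.zero
  rw [A.implicative a A.one, A.bck3]

theorem sup_compl_eq (A : BoundedImplicativeBCKAlgebra X) (a : X) :
    sup A a (A.star A.one a) = A.one := by
  show A.star A.one
    (A.star (A.star A.one a) (A.star (A.star A.one a) (A.star A.one (A.star A.one a)))) = A.one
  rw [Nn A a, posimpl1 A A.one a, A.bck3, star_zero]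

theorem disj (A : BoundedImplicativeBCKAlgebra X) {t x y : X}
    (h1 : A.star t (A.star x y) = A.zero) (h2 : A.star t y = A.zero) : t = A.zero := by
  have h3 := anti2 A x h2
  have h4 := anti2 A t h3
  rw [h1, star_zero, A.implicative t x] at h4
  exact h4

theorem starinf (A : BoundedImplicativeBCKAlgebra X) (x y : X) :
    A.star (A.star x y) (inf A x y) = A.star x y := by
  refine A.bck5 _ _ (star_le A (A.star x y) (inf A x y)) ?_
  refine disj A (x := x) (y := y) ?_ ?_
  · exact star_le A (A.star x y) (A.star (A.star x y) (inf A x y))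
  · exact bck_trans A (A.bck2 (A.star x y) (inf A x y)) (inf_le_right A x y)

theorem adj (A : BoundedImplicativeBCKAlgebra X) {x y z : X}
    (h : A.star (A.star x y) z = A.zero) : A.star x (sup A y z) = A.zero := by
  -- x ≤ sup (inf x y) (x*y) ≤ sup y z
  have hu2 : A.star (inf A (A.star A.one (inf A x y)) (A.star A.one (A.star x y)))
      (A.star A.one x) = A.zero := by
    show A.star (A.star (A.star A.one (inf A x y))
      (A.star (A.star A.one (inf A x y)) (A.star A.one (A.star x y)))) (A.star A.one x) = A.zero
    rw [nstar A (inf A x y) (A.star x y), starinf A x y,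
        exchange A (A.star A.one (inf A x y)) (A.star x y) (A.star A.one x),
        nstar A (inf A x y) x]
    show A.star (A.star x (A.star x (A.star x y))) (A.star x y) = A.zero
    rw [star_star_star A x y, A.bck3]
  have hx : A.star x (sup A (inf A x y) (A.star x y)) = A.zero := le_N_of_le_N A hu2
  have hs : A.star (sup A (inf A x y) (A.star x y)) (sup A y z) = A.zero := by
    refine sup_le A ?_ ?_
    · exact bck_trans A (inf_le_right A x y) (le_sup_left A y z)
    · exact bck_trans A h (le_sup_right A y z)
  exact bck_trans A hx hs

theorem inf_star_eq (A : BoundedImplicativeBCKAlgebra X) (a b : X) :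
    A.star b (inf A a b) = A.star b a := by
  show A.star b (A.star a (A.star a b)) = A.star b a
  rw [comm A a b, star_star_star]

theorem infstar (A : BoundedImplicativeBCKAlgebra X) {t : X} (a b : X)
    (h : A.star t a = A.zero) :
    A.star (A.star t (inf A a b)) (A.star t b) = A.zero := by
  have h1 := A.bck1 t (inf A a b) b
  rw [inf_star_eq A a b] at h1
  refine disj A (x := b) (y := a) h1 ?_
  exact bck_trans A (bck_trans A
    (star_le A (A.star t (inf A a b)) (A.star t b)) (star_le A t (inf A a b))) h

theorem supstar (A : BoundedImplicativeBCKAlgebra X) (b c : X) :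
    A.star (sup A b c) b = A.star c b := by
  have h : A.star (A.star A.one (inf A (A.star A.one b) (A.star A.one c)))
      (A.star A.one (A.star A.one b)) = A.star c b := by
    calc A.star (A.star A.one (inf A (A.star A.one b) (A.star A.one c))) (A.star A.one (A.star A.one b)) = A.star (A.star A.one b) (inf A (A.star A.one b) (A.star A.one c)) := nstar A _ _
      _ = A.star (A.star A.one b) (A.star A.one c) := star_star_star A _ _
      _ = A.star c b := nstar A b c
  rw [Nn A b] at h
  exact h

theorem distrib (A : BoundedImplicativeBCKAlgebra X) (a b c : X) :
    A.star (inf A a (sup A b c)) (sup A (inf A a b) (inf A a c)) = A.zero := by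
  set x := inf A a (sup A b c) with hx
  have h1 : A.star x a = A.zero := inf_le_left A a (sup A b c)
  have h2 : A.star x (sup A b c) = A.zero := inf_le_right A a (sup A b c)
  have h3 := infstar A a b h1
  have h4 := mono1 A b h2
  have h5 : A.star (A.star (sup A b c) b) c = A.zero := by
    rw [supstar]; exact star_le A c b
  have hc : A.star (A.star x (inf A a b)) c = A.zero :=
    bck_trans A h3 (bck_trans A h4 h5)
  have ha : A.star (A.star x (inf A a b)) a = A.zero :=
    bck_trans A (star_le A x (inf A a b)) h1
  exact adj A (le_inf A ha hc)

end BCKHelper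

open BCKHelper

/-- Every bounded implicative BCK-algebra forms a BCK-module over itself: there are
an abelian group structure on `X` and a scalar multiplication satisfying the
BCK-module axioms. -/
theorem bounded_implicative_is_module_over_itself {X : Type}
    (A : BoundedImplicativeBCKAlgebra X) :
    ∃ (add : X → X → X) (neg : X → X) (smul : X → X → X),
      (∀ a b c, add (add a b) c = add a (add b c)) ∧
      (∀ a b, add a b = add b a) ∧
      (∀ a, add A.zero a = a) ∧
      (∀ a, add (neg a) a = A.zero) ∧
      (∀ a b m, smul (A.star b (A.star b a)) m = smul a (smul b m)) ∧
      (∀ a m₁ m₂, smul a (add m₁ m₂) = add (smul a m₁) (smul a m₂)) ∧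
      (∀ m, smul A.zero m = A.zero) ∧
      (∀ m, smul A.one m = m) := by
  letI instL : Lattice X :=
    { le := fun a b => A.star a b = A.zero
      le_refl := A.bck3
      le_trans := fun a b c h1 h2 => bck_trans A h1 h2
      le_antisymm := A.bck5
      sup := sup A
      inf := inf A
      le_sup_left := le_sup_left A
      le_sup_right := le_sup_right A
      sup_le := fun a b c h1 h2 => sup_le A h1 h2
      inf_le_left := inf_le_left A
      inf_le_right := inf_le_right A
      le_inf := fun a b c h1 h2 => le_inf A h1 h2 }
  letI instD : DistribLattice X := DistribLattice.ofInfSupLe (distrib A)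
  letI instB : BooleanAlgebra X :=
    { instD with
      compl := fun a => A.star A.one a
      top := A.one
      bot := A.zero
      le_top := A.bounded
      bot_le := A.bck4
      inf_compl_le_bot := fun x => by
        show A.star (inf A x (A.star A.one x)) A.zero = A.zero
        rw [inf_compl_eq]; exact A.bck3 A.zero
      top_le_sup_compl := fun x => by
        show A.star A.one (sup A x (A.star A.one x)) = A.zero
        rw [sup_compl_eq]; exact A.bck3 A.one }
  refine ⟨fun a b => symmDiff a b, id, fun a m => a ⊓ m, ?_, ?_, ?_, ?_, ?_, ?_, ?_, ?_⟩
  · exact symmDiff_assoc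
  · exact symmDiff_comm
  · intro a; exact bot_symmDiff a
  · intro a; exact symmDiff_self a
  · intro a b m
    show (b ⊓ a) ⊓ m = a ⊓ (b ⊓ m)
    rw [_root_.inf_comm b a, inf_assoc]
  · intro a m₁ m₂; exact inf_symmDiff_distrib_left a m₁ m₂
  · intro m; exact bot_inf_eq m
  · intro m; exact top_inf_eq m
end

section
/- Let M be a BCK-module with Baig topology admitted by a decreasing sequence of submodules, and endow M × M with the product topology. Then the addition map f : M × M → M, f(m, m') = m + m', is continuous. -/
/-- A bounded commutative BCK-algebra. -/
structure BoundedCommBCKAlgebra (X : Type) extends BCKAlgebra X where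
  one : X
  bounded : ∀ a, star a one = zero
  comm : ∀ a b, star b (star b a) = star a (star a b)

/-- The coset `v + S` of a subset `S` of an abelian group. -/
def coset {M : Type} [AddCommGroup M] (v : M) (S : Set M) : Set M :=
  (fun u => v + u) '' S

/-- A BCK-module structure over a bounded commutative BCK-algebra `A` on an
abelian group `M`. -/
structure BCKModuleStr {X : Type} (A : BoundedCommBCKAlgebra X) (M : Type)
    [AddCommGroup M] where
  smul : X → M → M
  smul_wedge : ∀ a b m, smul (A.star b (A.star b a)) m = smul a (smul b m)
  smul_add : ∀ a m₁ m₂, smul a (m₁ + m₂) = smul a m₁ + smul a m₂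
  zero_smul : ∀ m, smul A.zero m = 0
  one_smul : ∀ m, smul A.one m = m

/-- A subgroup `S` of `M` is a BCK-submodule if it is closed under the scalar action. -/
def IsBCKSubmodule {X : Type} {A : BoundedCommBCKAlgebra X} {M : Type} [AddCommGroup M]
    (s : BCKModuleStr A M) (S : AddSubgroup M) : Prop :=
  ∀ x m, m ∈ S → s.smul x m ∈ S

/-- The Baig open-set predicate for a (decreasing) sequence of subgroups. -/
def baigIsOpen {M : Type} [AddCommGroup M] (Mn : ℕ → AddSubgroup M) (V : Set M) : Prop :=
  ∀ v ∈ V, ∃ n, coset v (Mn n) ⊆ V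

/-- The Baig topology admitted by a decreasing sequence of subgroups. -/
def baigTopology {M : Type} [AddCommGroup M] (Mn : ℕ → AddSubgroup M)
    (hdec : ∀ n, Mn (n + 1) ≤ Mn n) : TopologicalSpace M where
  IsOpen := baigIsOpen Mn
  isOpen_univ := fun _ _ => ⟨0, fun _ _ => trivial⟩
  isOpen_inter := by
    intro U V hU hV v hv
    obtain ⟨n₁, h₁⟩ := hU v hv.1
    obtain ⟨n₂, h₂⟩ := hV v hv.2
    refine ⟨max n₁ n₂, fun x hx => ?_⟩
    obtain ⟨u, hu, rfl⟩ := hx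
    exact ⟨h₁ ⟨u, antitone_nat_of_succ_le hdec (le_max_left n₁ n₂) hu, rfl⟩,
           h₂ ⟨u, antitone_nat_of_succ_le hdec (le_max_right n₁ n₂) hu, rfl⟩⟩
  isOpen_sUnion := by
    intro S hS v hv
    obtain ⟨t, ht, hvt⟩ := hv
    obtain ⟨n, hn⟩ := hS t ht v hvt
    exact ⟨n, hn.trans (Set.subset_sUnion_of_mem ht)⟩

section Coset

variable {M : Type} [AddCommGroup M]

theorem self_mem_coset (v : M) (S : AddSubgroup M) : v ∈ coset v S :=
  ⟨0, S.zero_mem, add_zero v⟩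

theorem add_mem_coset_add {S : AddSubgroup M} {a b x y : M} (hx : x ∈ coset a S)
    (hy : y ∈ coset b S) : x + y ∈ coset (a + b) S := by
  obtain ⟨u, hu, rfl⟩ := hx
  obtain ⟨u', hu', rfl⟩ := hy
  exact ⟨u + u', S.add_mem hu hu', add_add_add_comm a b u u'⟩

theorem baigIsOpen_coset (Mn : ℕ → AddSubgroup M) (v : M) (n : ℕ) :
    baigIsOpen Mn (coset v (Mn n)) := by
  rintro _ ⟨u, hu, rfl⟩
  refine ⟨n, ?_⟩
  rintro _ ⟨u', hu', rfl⟩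
  exact ⟨u + u', (Mn n).add_mem hu hu', (add_assoc v u u').symm⟩

end Coset

theorem add_continuous_general {M : Type} [AddCommGroup M]
    (Mn : ℕ → AddSubgroup M) (hdec : ∀ n, Mn (n + 1) ≤ Mn n) :
    @Continuous (M × M) M
      (@instTopologicalSpaceProd M M (baigTopology Mn hdec) (baigTopology Mn hdec))
      (baigTopology Mn hdec) (fun p => p.1 + p.2) := by
  let : TopologicalSpace M := baigTopology Mn hdec
  refine continuous_def.2 fun V hV => isOpen_prod_iff.2 fun a b hab => ?_
  obtain ⟨n, hn⟩ := hV (a + b) hab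
  exact ⟨coset a (Mn n), coset b (Mn n), baigIsOpen_coset Mn a n, baigIsOpen_coset Mn b n,
    self_mem_coset a (Mn n), self_mem_coset b (Mn n),
    fun p hp => hn (add_mem_coset_add hp.1 hp.2)⟩

/-- Addition `(m, m') ↦ m + m'` is continuous from `M × M` (product of Baig
topologies) to `M` with the Baig topology. -/
theorem add_continuous {X M : Type} [AddCommGroup M]
    {A : BoundedCommBCKAlgebra X} (s : BCKModuleStr A M) (Mn : ℕ → AddSubgroup M)
    (hsub : ∀ n, IsBCKSubmodule s (Mn n)) (hdec : ∀ n, Mn (n + 1) ≤ Mn n) :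
    @Continuous (M × M) M
      (@instTopologicalSpaceProd M M (baigTopology Mn hdec) (baigTopology Mn hdec))
      (baigTopology Mn hdec) (fun p => p.1 + p.2) :=
  add_continuous_general Mn hdec
end

section
/- A strict X-isomorphism between BCK-modules with Baig topologies is a homeomorphism. -/
/-- A strict `X`-isomorphism between BCK-modules with Baig topologies is a
homeomorphism. -/
theorem strict_isomorphism_homeomorph {X M M' : Type} [AddCommGroup M]
    [AddCommGroup M'] {A : BoundedCommBCKAlgebra X}
    (s : BCKModuleStr A M) (s' : BCKModuleStr A M')
    (Mn : ℕ → AddSubgroup M) (M'n : ℕ → AddSubgroup M')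
    (hsub : ∀ n, IsBCKSubmodule s (Mn n)) (hdec : ∀ n, Mn (n + 1) ≤ Mn n)
    (hsub' : ∀ n, IsBCKSubmodule s' (M'n n)) (hdec' : ∀ n, M'n (n + 1) ≤ M'n n)
    (f : M → M') (hadd : ∀ m₁ m₂, f (m₁ + m₂) = f m₁ + f m₂)
    (hsmul : ∀ x m, f (s.smul x m) = s'.smul x (f m))
    (hbij : Function.Bijective f)
    (hstrict : ∀ n, f '' (Mn n : Set M) = Set.range f ∩ (M'n n : Set M')) :
    ∃ h : @Homeomorph M M' (baigTopology Mn hdec) (baigTopology M'n hdec'),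
      ∀ m : M,
        (@Homeomorph.toEquiv M M' (baigTopology Mn hdec) (baigTopology M'n hdec') h) m
          = f m := by
  have himg : ∀ n, f '' (Mn n : Set M) = (M'n n : Set M') := by
    intro n
    rw [hstrict n, Set.range_eq_univ.2 hbij.2, Set.univ_inter]
  have hopen : ∀ U : Set M, baigIsOpen Mn U → baigIsOpen M'n (f '' U) := by
    intro U hU w hw
    obtain ⟨v, hv, rfl⟩ := hw
    obtain ⟨n, hn⟩ := hU v hv
    refine ⟨n, fun x hx => ?_⟩
    obtain ⟨u, hu, rfl⟩ := hx
    rw [← himg n] at hu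
    obtain ⟨u', hu', rfl⟩ := hu
    exact ⟨v + u', hn ⟨u', hu', rfl⟩, by simp [hadd]⟩
  have hcont : ∀ V : Set M', baigIsOpen M'n V → baigIsOpen Mn (f ⁻¹' V) := by
    intro V hV v hv
    obtain ⟨n, hn⟩ := hV (f v) hv
    refine ⟨n, fun x hx => ?_⟩
    obtain ⟨u, hu, rfl⟩ := hx
    have : f u ∈ (M'n n : Set M') := by
      rw [← himg n]; exact ⟨u, hu, rfl⟩
    show f (v + u) ∈ V
    rw [hadd]
    exact hn ⟨f u, this, rfl⟩
  letI := baigTopology Mn hdec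
  letI := baigTopology M'n hdec'
  refine ⟨⟨Equiv.ofBijective f hbij, ?_, ?_⟩, fun m => rfl⟩
  · exact ⟨fun V hV => hcont V hV⟩
  · refine ⟨fun U hU => ?_⟩
    have : (Equiv.ofBijective f hbij).symm ⁻¹' U = f '' U := by
      ext x
      constructor
      · intro hx
        exact ⟨_, hx, (Equiv.ofBijective f hbij).apply_symm_apply x⟩
      · rintro ⟨u, hu, rfl⟩
        simpa [(Equiv.ofBijective f hbij).symm_apply_apply] using hu
    show IsOpen ((Equiv.ofBijective f hbij).symm ⁻¹' U)
    rw [this]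
    exact hopen U hU
end

section
/- Let M be a BCK-module with Baig topology admitted by a decreasing sequence of submodules (M_n), and K a submodule of M. Then (K_n) with K_n = K ∩ M_n is a decreasing sequence of submodules of K, and the induced Baig topology on K determined by (K_n) coincides with the subspace topology on K inherited from the Baig topology on M. -/
/-- For a submodule `K`, the sequence `K_n = K ∩ M_n` is a decreasing sequence of
submodules of `K`, and the induced Baig topology on `K` determined by it coincides
with the subspace topology inherited from the Baig topology on `M`. -/
theorem induced_baig_eq_subspace {X M : Type} [AddCommGroup M]
    {A : BoundedCommBCKAlgebra X} (s : BCKModuleStr A M) (Mn : ℕ → AddSubgroup M)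
    (hsub : ∀ n, IsBCKSubmodule s (Mn n)) (hdec : ∀ n, Mn (n + 1) ≤ Mn n)
    (K : AddSubgroup M) (hK : IsBCKSubmodule s K) :
    (∀ n, K ⊓ Mn (n + 1) ≤ K ⊓ Mn n ∧ IsBCKSubmodule s (K ⊓ Mn n)) ∧
    baigTopology (fun n => (Mn n).comap K.subtype)
        (fun n x hx => hdec n hx)
      = TopologicalSpace.induced (fun k : K => (k : M)) (baigTopology Mn hdec) := by
  constructor
  · intro n
    exact ⟨fun x hx => ⟨hx.1, hdec n hx.2⟩, fun a m hm => ⟨hK a m hm.1, hsub n a m hm.2⟩⟩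
  · refine TopologicalSpace.ext_iff.mpr fun U => ?_
    show baigIsOpen _ U ↔ ∃ V, baigIsOpen Mn V ∧ (fun k : K => (k : M)) ⁻¹' V = U
    constructor
    · intro hU
      choose n hn using fun u (hu : u ∈ U) => hU u hu
      refine ⟨⋃ (u : K) (hu : u ∈ U), coset (u : M) (Mn (n u hu)), ?_, ?_⟩
      · intro v hv
        simp only [Set.mem_iUnion] at hv
        obtain ⟨u, hu, m, hm, rfl⟩ := hv
        refine ⟨n u hu, fun x hx => ?_⟩
        obtain ⟨m', hm', rfl⟩ := hx
        simp only [Set.mem_iUnion]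
        exact ⟨u, hu, m + m', (Mn _).add_mem hm hm', by abel⟩
      · ext k
        simp only [Set.mem_preimage, Set.mem_iUnion]
        constructor
        · rintro ⟨u, hu, m, hm, hk⟩
          have hmK : m ∈ K := by
            have h2 : m = (k : M) - (u : M) := by simp [← hk]
            rw [h2]; exact K.sub_mem k.2 u.2
          have : k ∈ coset u ((Mn (n u hu)).comap K.subtype) := by
            refine ⟨⟨m, hmK⟩, hm, ?_⟩
            ext; exact hk
          exact hn u hu this
        · intro hk
          exact ⟨k, hk, 0, (Mn _).zero_mem, by simp⟩
    · rintro ⟨V, hV, rfl⟩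
      intro u hu
      obtain ⟨n, hn⟩ := hV (u : M) hu
      refine ⟨n, fun x hx => ?_⟩
      obtain ⟨m, hm, rfl⟩ := hx
      exact hn ⟨(m : M), hm, rfl⟩
end

section
/- Let f : M → M' be a compatible X-homomorphism of BCK-modules with decreasing sequences of submodules (M_n), (M'_n), and for each n let f_n : M/M_n → M'/M'_n be the induced map f_n(m + M_n) = f(m) + M'_n. Then f is strict (f(M_n) = f(M) ∩ M'_n for all n) if and only if for every n the restriction α_n : Ker f → Ker f_n, α_n(k) = k + M_n, is surjective. -/
/-- A compatible `X`-homomorphism `f : M → M'` is strict if and only if for every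
`n` the restriction `α_n : Ker f → Ker f_n`, `α_n(k) = k + M_n`, of the induced map
`f_n : M/M_n → M'/M'_n` is surjective. -/
theorem strict_iff_ker_restriction_surjective {X M M' : Type} [AddCommGroup M]
    [AddCommGroup M'] {A : BoundedCommBCKAlgebra X}
    (s : BCKModuleStr A M) (s' : BCKModuleStr A M')
    (Mn : ℕ → AddSubgroup M) (M'n : ℕ → AddSubgroup M')
    (hsub : ∀ n, IsBCKSubmodule s (Mn n)) (hdec : ∀ n, Mn (n + 1) ≤ Mn n)
    (hsub' : ∀ n, IsBCKSubmodule s' (M'n n)) (hdec' : ∀ n, M'n (n + 1) ≤ M'n n)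
    (f : M → M') (hadd : ∀ m₁ m₂, f (m₁ + m₂) = f m₁ + f m₂)
    (hsmul : ∀ x m, f (s.smul x m) = s'.smul x (f m))
    (hcompat : ∀ n, ∀ m ∈ Mn n, f m ∈ M'n n)
    (fn : ∀ n, M ⧸ Mn n → M' ⧸ M'n n)
    (hfn : ∀ (n : ℕ) (m : M),
      fn n (QuotientAddGroup.mk' (Mn n) m) = QuotientAddGroup.mk' (M'n n) (f m)) :
    (∀ n, f '' (Mn n : Set M) = Set.range f ∩ (M'n n : Set M')) ↔
    (∀ (n : ℕ) (q : M ⧸ Mn n), fn n q = 0 →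
      ∃ k : M, f k = 0 ∧ QuotientAddGroup.mk' (Mn n) k = q) := by
  have hf0 : f 0 = 0 := by
    have := hadd 0 0
    simp at this
    linear_combination (norm := abel_nf) this
  have hsub : ∀ m₁ m₂ : M, f (m₁ - m₂) = f m₁ - f m₂ := by
    intro m₁ m₂
    have h := hadd (m₁ - m₂) m₂
    simp at h
    rw [h]; abel
  constructor
  · intro hstrict n q hq
    obtain ⟨m, rfl⟩ := QuotientAddGroup.mk'_surjective (Mn n) q
    have hfm : f m ∈ M'n n := by
      have := hfn n m
      rw [hq] at this
      exact (QuotientAddGroup.eq_zero_iff _).mp this.symm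
    have : f m ∈ f '' (Mn n : Set M) := by
      rw [hstrict n]; exact ⟨⟨m, rfl⟩, hfm⟩
    obtain ⟨u, hu, hfu⟩ := this
    refine ⟨m - u, by rw [hsub, hfu, sub_self], ?_⟩
    rw [QuotientAddGroup.mk'_eq_mk' ]
    exact ⟨u, hu, by abel⟩
  · intro hsurj n
    ext y
    constructor
    · rintro ⟨m, hm, rfl⟩
      exact ⟨⟨m, rfl⟩, hcompat n m hm⟩
    · rintro ⟨⟨m, rfl⟩, hy⟩
      have hq : fn n (QuotientAddGroup.mk' (Mn n) m) = 0 := by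
        rw [hfn n m]
        exact (QuotientAddGroup.eq_zero_iff _).mpr hy
      obtain ⟨k, hk0, hk⟩ := hsurj n _ hq
      rw [QuotientAddGroup.mk'_eq_mk'] at hk
      obtain ⟨u, hu, hum⟩ := hk
      refine ⟨m - k, ?_, by rw [hsub, hk0, sub_zero]⟩
      have : m - k = u := by rw [← hum]; abel
      rw [this]; exact hu
end
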